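/- arXiv:2102.04994 — 2 statements merged into one kernel-verified Lean document; each statement's English description precedes it below -/
import Mathlib

section
/- Let G be a graph with a bipartition (A, B) (every edge of G has one end in A and one end in B), such that every vertex in B has a neighbour in A. Let Γ, Δ, d > 0 be real numbers with d < 1, such that every vertex in A has at most Δ neighbours in B. Then either (i) for some integer t ≥ 1 there is a (t, Γ·t^{−1/d})-comb in (A, B), or (ii) |B| ≤ (3^{d+1} / (3/2 − (3/2)^d)) · Γ^d · Δ^{1−d}. -/
open SimpleGraph

/-- The independence (stable set) number of a graph: the clique number of the complement. -/
noncomputable def alphaNum {V : Type*} (G : SimpleGraph V) : ℕ := Gᶜ.cliqueNum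

/-- The clique number of a graph. -/
noncomputable def omegaNum {V : Type*} (G : SimpleGraph V) : ℕ := G.cliqueNum

/-- κ(G) = α(G)·ω(G). -/
noncomputable def kappaNum {V : Type*} (G : SimpleGraph V) : ℕ := alphaNum G * omegaNum G

/-- A `(t, k)`-comb in `G`: distinct vertices `a i`, pairwise disjoint sets `B i` avoiding
all the `a j`'s, with `a i` adjacent to all of `B i`, `a i` with no neighbour in `B j` for
`j ≠ i`, and each `|B i| ≥ k`. -/
def IsComb {V : Type*} (G : SimpleGraph V) {t : ℕ} (k : ℝ)
    (a : Fin t → V) (B : Fin t → Finset V) : Prop :=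
  Function.Injective a ∧
  Pairwise (Function.onFun Disjoint B) ∧
  (∀ i j, a i ∉ B j) ∧
  (∀ i, ∀ v ∈ B i, G.Adj (a i) v) ∧
  (∀ i j, i ≠ j → ∀ v ∈ B j, ¬ G.Adj (a i) v) ∧
  (∀ i, k ≤ ((B i).card : ℝ))

/-!
Work scale by scale. If every vertex of `A` has at most `K` neighbours in `F ⊆ B`, repeatedly
remove from `F` the neighbourhood `Dᵢ` of a vertex `aᵢ ∈ A` with more than `2K/3` neighbours
left; the remainder `F'` has all degrees at most `2K/3`. In the sequence `(aᵢ, Dᵢ)`, `aᵢ` misses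
every later `Dⱼ` and has fewer than `K/3` neighbours in the earlier ones. Scanning it backwards,
keep `aᵢ` with `Dᵢ` minus the neighbours of the vertices already kept whenever this loses at most
`K/3` vertices: this gives a comb with teeth larger than `K/3`. Each discarded `Dᵢ` loses more
than `K/3` vertices to kept vertices, each of which has fewer than `K/3` neighbours in discarded
sets, so at least half of the `Dᵢ` are kept. Without a `(t, Γ t^{-1/d})`-comb this forces
`t < (3Γ/K)^d`, hence `|F| ≤ |F'| + 2·3^d Γ^d K^{1-d}`. Iterating from `K = Δ` down to `K < 1`,
where `F = ∅` because every vertex of `B` has a neighbour in `A`, sums a geometric series of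
ratio `(2/3)^{1-d}`; its sum is the constant of the theorem.
-/

open Finset

lemma lt_rpow_of_lt_mul_rpow_neg_inv {t Γ k d : ℝ} (ht : 0 < t) (hk : 0 < k) (hd : 0 < d)
    (h : k < Γ * t ^ (-(1 / d))) : t < (Γ / k) ^ d := by
  have hpos : 0 < t ^ (1 / d) := Real.rpow_pos_of_pos ht _
  rw [Real.rpow_neg ht.le, ← div_eq_mul_inv, lt_div_iff₀ hpos] at h
  have h' : t ^ (1 / d) < Γ / k := by rw [lt_div_iff₀ hk]; linarith
  calc t = (t ^ (1 / d)) ^ d := by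
        rw [← Real.rpow_mul ht.le, one_div_mul_cancel hd.ne', Real.rpow_one]
    _ < (Γ / k) ^ d := Real.rpow_lt_rpow hpos.le h' hd

noncomputable def combBoundConst (d : ℝ) : ℝ := 3 ^ (d + 1) / (3 / 2 - (3 / 2 : ℝ) ^ d)

lemma three_halves_rpow_lt {d : ℝ} (hd1 : d < 1) : (3 / 2 : ℝ) ^ d < 3 / 2 := by
  simpa using Real.rpow_lt_rpow_of_exponent_lt (by norm_num : (1 : ℝ) < 3 / 2) hd1

lemma combBoundConst_pos {d : ℝ} (hd1 : d < 1) : 0 < combBoundConst d :=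
  div_pos (by positivity) (by linarith [three_halves_rpow_lt hd1])

lemma combBoundConst_mul_add {d : ℝ} (hd1 : d < 1) :
    combBoundConst d * (2 / 3) ^ (1 - d) + 2 * 3 ^ d = combBoundConst d := by
  have h23 : (2 / 3 : ℝ) ^ (1 - d) = 2 / 3 * (3 / 2) ^ d := by
    rw [Real.rpow_sub (by norm_num), Real.rpow_one, div_eq_mul_inv (2 / 3 : ℝ),
      ← Real.inv_rpow (by norm_num)]
    norm_num
  have h3 : (3 : ℝ) ^ (d + 1) = 3 ^ d * 3 := by rw [Real.rpow_add (by norm_num), Real.rpow_one]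
  unfold combBoundConst
  rw [h23, h3]
  have hne : (3 / 2 - (3 / 2 : ℝ) ^ d) ≠ 0 := by linarith [three_halves_rpow_lt hd1]
  rw [div_mul_eq_mul_div, div_add' _ _ _ hne, div_left_inj' hne]
  ring

section Combs

variable {V : Type*} (G : SimpleGraph V)

def CombCompatible (p q : V × Finset V) : Prop :=
  p.1 ≠ q.1 ∧ Disjoint p.2 q.2 ∧ (∀ v ∈ q.2, ¬ G.Adj p.1 v) ∧ (∀ v ∈ p.2, ¬ G.Adj q.1 v)

variable {G} in
lemma CombCompatible.symm {p q : V × Finset V} (h : CombCompatible G p q) :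
    CombCompatible G q p :=
  ⟨h.1.symm, h.2.1.symm, h.2.2.2, h.2.2.1⟩

lemma isComb_of_pairwise {k : ℝ} {C : List (V × Finset V)}
    (hC : C.Pairwise (CombCompatible G)) (hadj : ∀ p ∈ C, ∀ v ∈ p.2, G.Adj p.1 v)
    (hcard : ∀ p ∈ C, k ≤ #p.2) (hout : ∀ p ∈ C, ∀ q ∈ C, p.1 ∉ q.2) :
    IsComb G k (fun i : Fin C.length => (C.get i).1) (fun i => (C.get i).2) := by
  have hrel : ∀ i j : Fin C.length, i ≠ j → CombCompatible G (C.get i) (C.get j) := by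
    intro i j hij
    rcases hij.lt_or_gt with h | h
    · exact List.pairwise_iff_get.mp hC i j h
    · exact (List.pairwise_iff_get.mp hC j i h).symm
  refine ⟨fun i j h => ?_, fun i j h => (hrel i j h).2.1,
    fun i j => hout _ (C.get_mem i) _ (C.get_mem j), fun i => hadj _ (C.get_mem i),
    fun i j h => (hrel i j h).2.2.1, fun i => hcard _ (C.get_mem i)⟩
  by_contra hne
  exact (hrel i j hne).1 h

def HasCombIn (A B : Finset V) (k : ℕ → ℝ) : Prop :=
  ∃ t : ℕ, 1 ≤ t ∧ ∃ a : Fin t → V, ∃ Bs : Fin t → Finset V,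
    IsComb G (k t) a Bs ∧ (∀ i, a i ∈ A) ∧ (∀ i, Bs i ⊆ B)

/-- In a list that is pairwise `TriangularPair G`, each vertex has no neighbour in the sets of the
later pairs, but may have neighbours in those of the earlier ones. -/
def TriangularPair (p q : V × Finset V) : Prop :=
  Disjoint p.2 q.2 ∧ ∀ v ∈ q.2, ¬ G.Adj p.1 v

variable [DecidableRel G.Adj]

lemma hasCombIn_of_pairwise {A B : Finset V} (hAB : Disjoint A B) {k : ℕ → ℝ}
    {C : List (V × Finset V)} (hC₀ : C ≠ []) (hC : C.Pairwise (CombCompatible G))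
    (hCAB : ∀ p ∈ C, p.1 ∈ A ∧ p.2 ⊆ B.filter (G.Adj p.1))
    (hcard : ∀ p ∈ C, k C.length ≤ #p.2) :
    HasCombIn G A B k :=
  ⟨C.length, List.length_pos_iff.mpr hC₀, _, _,
    isComb_of_pairwise G hC (fun p hp _ hv => (mem_filter.mp ((hCAB p hp).2 hv)).2) hcard
      (fun p hp q hq h => disjoint_left.mp hAB (hCAB p hp).1 (mem_filter.mp ((hCAB q hq).2 h)).1),
    fun i => (hCAB _ (C.get_mem i)).1,
    fun i => (hCAB _ (C.get_mem i)).2.trans (filter_subset _ _)⟩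

lemma card_filter_exists_adj_le_sum (D : Finset V) (L : List (V × Finset V)) :
    #(D.filter fun v => ∃ p ∈ L, G.Adj p.1 v) ≤ (L.map fun p => #(D.filter (G.Adj p.1))).sum := by
  classical
  induction L with
  | nil => simp
  | cons q L ih =>
    simp only [List.mem_cons, exists_eq_or_imp, filter_or, List.map_cons, List.sum_cons]
    exact (card_union_le _ _).trans (by omega)

/-- The backward scan: `R` is the union of the discarded sets and `r` their number. -/
lemma exists_compatible_teeth_aux {k : ℝ} (hk : 0 ≤ k) (L : List (V × Finset V))
    (hL : L.Pairwise (TriangularPair G)) (hadj : ∀ q ∈ L, ∀ v ∈ q.2, G.Adj q.1 v)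
    (hbig : ∀ q ∈ L, 2 * k < #q.2) :
    ∃ (C : List (V × Finset V)) (r : ℕ) (R : Finset V),
      C.Pairwise (CombCompatible G) ∧
      (∀ p ∈ C, ∃ q ∈ L, p.1 = q.1 ∧ p.2 ⊆ q.2 ∧ k < #p.2 ∧ Disjoint R q.2) ∧
      (∀ v ∈ R, ∃ q ∈ L, v ∈ q.2) ∧
      L.length = C.length + r ∧
      r * k ≤ ((C.map fun p => #(R.filter (G.Adj p.1))).sum : ℝ) := by
  classical
  induction L with
  | nil => exact ⟨[], 0, ∅, List.Pairwise.nil, by simp, by simp, rfl, by simp⟩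
  | cons q₀ L ih =>
    rw [List.pairwise_cons] at hL
    obtain ⟨C, r, R, hC, hCL, hRL, hlen, hsum⟩ := ih hL.2
      (fun q hq => hadj q (List.mem_cons_of_mem _ hq))
      (fun q hq => hbig q (List.mem_cons_of_mem _ hq))
    have hRq₀ : Disjoint R q₀.2 := by
      refine disjoint_left.mpr fun v hvR hv₀ => ?_
      obtain ⟨q, hq, hvq⟩ := hRL v hvR
      exact disjoint_left.mp (hL.1 q hq).1 hv₀ hvq
    -- `S`: the part of `q₀.2` already claimed by the teeth chosen among the later pairs
    set S := q₀.2.filter fun v => ∃ p ∈ C, G.Adj p.1 v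
    have hq₀C : ∀ p ∈ C, Disjoint p.2 q₀.2 ∧ ∀ v ∈ p.2, ¬ G.Adj q₀.1 v := by
      intro p hp
      obtain ⟨q, hq, -, hpq, -⟩ := hCL p hp
      exact ⟨disjoint_of_subset_left hpq (hL.1 q hq).1.symm, fun v hv => (hL.1 q hq).2 v (hpq hv)⟩
    by_cases hS : (#S : ℝ) ≤ k
    · have hcard : k < #(q₀.2 \ S) := by
        rw [card_sdiff_of_subset (filter_subset _ _),
          Nat.cast_sub (card_le_card (filter_subset _ _))]
        linarith [hbig q₀ List.mem_cons_self]
      have hfree : ∀ v ∈ q₀.2 \ S, ∀ p ∈ C, ¬ G.Adj p.1 v := fun v hv p hp hpv =>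
        (mem_sdiff.mp hv).2 (mem_filter.mpr ⟨(mem_sdiff.mp hv).1, p, hp, hpv⟩)
      refine ⟨(q₀.1, q₀.2 \ S) :: C, r, R, List.pairwise_cons.mpr ⟨fun p hp => ?_, hC⟩, ?_, ?_,
        by simp [hlen]; omega, ?_⟩
      · obtain ⟨v, hv⟩ := card_pos.mp (by exact_mod_cast hk.trans_lt hcard)
        refine ⟨fun h => hfree v hv p hp ?_,
          disjoint_of_subset_left sdiff_subset (hq₀C p hp).1.symm, (hq₀C p hp).2,
          fun w hw => hfree w hw p hp⟩
        exact h ▸ hadj q₀ List.mem_cons_self v (mem_sdiff.mp hv).1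
      · intro p hp
        rcases List.mem_cons.mp hp with rfl | hp
        · exact ⟨q₀, List.mem_cons_self, rfl, sdiff_subset, hcard, hRq₀⟩
        · obtain ⟨q, hq, h⟩ := hCL p hp
          exact ⟨q, List.mem_cons_of_mem _ hq, h⟩
      · intro v hv
        obtain ⟨q, hq, hvq⟩ := hRL v hv
        exact ⟨q, List.mem_cons_of_mem _ hq, hvq⟩
      · simp only [List.map_cons, List.sum_cons, Nat.cast_add]
        linarith [(Nat.cast_nonneg _ : (0 : ℝ) ≤ #(R.filter (G.Adj q₀.1)))]
    · have hunion : ∀ p : V × Finset V, #((R ∪ q₀.2).filter (G.Adj p.1))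
          = #(R.filter (G.Adj p.1)) + #(q₀.2.filter (G.Adj p.1)) := fun p => by
        rw [filter_union, card_union_of_disjoint (disjoint_filter_filter hRq₀)]
      refine ⟨C, r + 1, R ∪ q₀.2, hC, fun p hp => ?_, fun v hv => ?_, by simp [hlen]; omega, ?_⟩
      · obtain ⟨q, hq, h1, h2, h3, hRq⟩ := hCL p hp
        exact ⟨q, List.mem_cons_of_mem _ hq, h1, h2, h3,
          disjoint_union_left.mpr ⟨hRq, (hL.1 q hq).1⟩⟩
      · rcases mem_union.mp hv with hv | hv
        · obtain ⟨q, hq, hvq⟩ := hRL v hv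
          exact ⟨q, List.mem_cons_of_mem _ hq, hvq⟩
        · exact ⟨q₀, List.mem_cons_self, hv⟩
      · have hS_le : (#S : ℝ) ≤ ((C.map fun p => #(q₀.2.filter (G.Adj p.1))).sum : ℝ) := by
          exact_mod_cast card_filter_exists_adj_le_sum G q₀.2 C
        simp only [hunion, List.sum_map_add, Nat.cast_add, Nat.cast_one]
        linarith

lemma exists_compatible_teeth_of_triangular {k : ℝ} (hk : 0 < k) (U : Finset V)
    (L : List (V × Finset V)) (hL : L.Pairwise (TriangularPair G))
    (hU : ∀ q ∈ L, q.2 ⊆ U.filter (G.Adj q.1))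
    (hdeg : ∀ q ∈ L, (#(U.filter (G.Adj q.1)) : ℝ) ≤ 3 * k) (hbig : ∀ q ∈ L, 2 * k < #q.2) :
    ∃ C : List (V × Finset V), C.Pairwise (CombCompatible G) ∧
      (∀ p ∈ C, ∃ q ∈ L, p.1 = q.1 ∧ p.2 ⊆ q.2 ∧ k < #p.2) ∧ L.length ≤ 2 * C.length := by
  classical
  obtain ⟨C, r, R, hC, hCL, hRL, hlen, hsum⟩ := exists_compatible_teeth_aux G hk.le L hL
    (fun q hq v hv => (mem_filter.mp (hU q hq hv)).2) hbig
  have hterm : ∀ p ∈ C, (#(R.filter (G.Adj p.1)) : ℝ) ≤ k := by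
    intro p hp
    obtain ⟨q, hq, hpq, -, -, hRq⟩ := hCL p hp
    have hsub : R.filter (G.Adj p.1) ∪ q.2 ⊆ U.filter (G.Adj q.1) := by
      refine union_subset (fun v hv => ?_) (hU q hq)
      obtain ⟨q', hq', hvq'⟩ := hRL v (mem_filter.mp hv).1
      exact mem_filter.mpr ⟨(mem_filter.mp (hU q' hq' hvq')).1, hpq ▸ (mem_filter.mp hv).2⟩
    have := card_le_card hsub
    rw [card_union_of_disjoint (hRq.mono_left (filter_subset _ _))] at this
    have : (#(R.filter (G.Adj p.1)) : ℝ) + #q.2 ≤ 3 * k :=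
      le_trans (by exact_mod_cast this) (hdeg q hq)
    linarith [hbig q hq]
  have hrC : (r : ℝ) * k ≤ C.length * k := by
    refine hsum.trans ?_
    rw [Nat.cast_list_sum, List.map_map]
    have := List.sum_le_card_nsmul (C.map fun p => (#(R.filter (G.Adj p.1)) : ℝ)) k
      fun x hx => by
        obtain ⟨p, hp, rfl⟩ := List.mem_map.mp hx
        exact hterm p hp
    rwa [List.length_map, nsmul_eq_mul] at this
  have : r ≤ C.length := by exact_mod_cast le_of_mul_le_mul_right hrC hk
  exact ⟨C, hC, fun p hp => (hCL p hp).imp fun q ⟨hq, h1, h2, h3, _⟩ => ⟨hq, h1, h2, h3⟩, by omega⟩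

lemma exists_triangular_extraction (A : Finset V) {θ : ℝ} (hθ : 0 ≤ θ) (F : Finset V) :
    ∃ (L : List (V × Finset V)) (F' : Finset V), L.Pairwise (TriangularPair G) ∧
      (∀ q ∈ L, q.1 ∈ A ∧ q.2 ⊆ F.filter (G.Adj q.1) ∧ θ < #q.2) ∧
      F' ⊆ F ∧ #F ≤ #F' + (L.map fun q => #q.2).sum ∧
      ∀ a ∈ A, (#(F'.filter (G.Adj a)) : ℝ) ≤ θ := by
  classical
  induction F using Finset.strongInduction with
  | H F ih =>
  by_cases h : ∃ a ∈ A, θ < #(F.filter (G.Adj a))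
  · obtain ⟨a, ha, hθa⟩ := h
    set D := F.filter (G.Adj a)
    have hD : D.Nonempty := card_pos.mp (by exact_mod_cast hθ.trans_lt hθa)
    obtain ⟨L, F', hL, hLq, hF', hcard, hdeg⟩ :=
      ih (F \ D) (sdiff_ssubset (filter_subset _ _) hD)
    have hrest : ∀ q ∈ L, q.2 ⊆ F \ D := fun q hq =>
      (hLq q hq).2.1.trans (filter_subset _ _)
    refine ⟨(a, D) :: L, F', List.pairwise_cons.mpr ⟨fun q hq => ?_, hL⟩, fun q hq => ?_,
      hF'.trans sdiff_subset, ?_, hdeg⟩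
    · refine ⟨disjoint_of_subset_right (hrest q hq) disjoint_sdiff, fun v hv hav => ?_⟩
      have hv' := mem_sdiff.mp (hrest q hq hv)
      exact hv'.2 (mem_filter.mpr ⟨hv'.1, hav⟩)
    · rcases List.mem_cons.mp hq with rfl | hq
      · exact ⟨ha, subset_rfl, hθa⟩
      · obtain ⟨h1, h2, h3⟩ := hLq q hq
        exact ⟨h1, h2.trans (filter_subset_filter _ sdiff_subset), h3⟩
    · have := card_sdiff_add_card_eq_card (s := D) (t := F) (filter_subset _ _)
      simp only [List.map_cons, List.sum_cons]
      omega
  · simp only [not_exists, not_and, not_lt] at h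
    exact ⟨[], F, List.Pairwise.nil, by simp, subset_rfl, by simp, h⟩

lemma exists_compatible_teeth_of_degree_le (A : Finset V) {K : ℝ} (hK : 0 < K) (F : Finset V)
    (hdeg : ∀ a ∈ A, (#(F.filter (G.Adj a)) : ℝ) ≤ K) :
    ∃ (C : List (V × Finset V)) (F' : Finset V), C.Pairwise (CombCompatible G) ∧
      (∀ p ∈ C, p.1 ∈ A ∧ p.2 ⊆ F.filter (G.Adj p.1) ∧ K / 3 < #p.2) ∧
      F' ⊆ F ∧ (#F : ℝ) ≤ #F' + 2 * C.length * K ∧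
      ∀ a ∈ A, (#(F'.filter (G.Adj a)) : ℝ) ≤ 2 * K / 3 := by
  obtain ⟨L, F', hL, hLq, hF', hcard, hdeg'⟩ :=
    exists_triangular_extraction G A (by positivity : (0 : ℝ) ≤ 2 * K / 3) F
  obtain ⟨C, hC, hCL, hlen⟩ := exists_compatible_teeth_of_triangular G (by positivity : 0 < K / 3)
    F L hL (fun q hq => (hLq q hq).2.1) (fun q hq => by linarith [hdeg q.1 (hLq q hq).1])
    (fun q hq => by linarith [(hLq q hq).2.2])
  have hsum : ((L.map fun q => #q.2).sum : ℝ) ≤ L.length * K := by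
    rw [Nat.cast_list_sum, List.map_map]
    have := List.sum_le_card_nsmul (L.map fun q => (#q.2 : ℝ)) K fun x hx => by
      obtain ⟨q, hq, rfl⟩ := List.mem_map.mp hx
      exact (Nat.cast_le.mpr (card_le_card (hLq q hq).2.1)).trans (hdeg q.1 (hLq q hq).1)
    rwa [List.length_map, nsmul_eq_mul] at this
  refine ⟨C, F', hC, fun p hp => ?_, hF', ?_, hdeg'⟩
  · obtain ⟨q, hq, hpq, hsub, hk⟩ := hCL p hp
    exact ⟨hpq ▸ (hLq q hq).1, hpq ▸ hsub.trans (hLq q hq).2.1, hk⟩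
  · have hlen' : (L.length : ℝ) ≤ 2 * C.length := by exact_mod_cast hlen
    have hcard' : (#F : ℝ) ≤ #F' + (L.map fun q => #q.2).sum := by exact_mod_cast hcard
    nlinarith

lemma length_mul_le_of_not_hasCombIn {A B : Finset V} (hAB : Disjoint A B) {Γ d K : ℝ}
    (hΓ : 0 ≤ Γ) (hd : 0 < d) (hK : 0 < K)
    (hno : ¬ HasCombIn G A B fun t => Γ * (t : ℝ) ^ (-(1 / d))) {C : List (V × Finset V)}
    (hC : C.Pairwise (CombCompatible G))
    (hCAB : ∀ p ∈ C, p.1 ∈ A ∧ p.2 ⊆ B.filter (G.Adj p.1) ∧ K / 3 < #p.2) :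
    C.length * K ≤ 3 ^ d * Γ ^ d * K ^ (1 - d) := by
  by_cases hC₀ : C = []
  · subst hC₀
    simp only [List.length_nil, Nat.cast_zero, zero_mul]
    positivity
  have ht : 0 < (C.length : ℝ) := by exact_mod_cast List.length_pos_iff.mpr hC₀
  have hlt : K / 3 < Γ * (C.length : ℝ) ^ (-(1 / d)) := by
    by_contra! hle
    exact hno (hasCombIn_of_pairwise G hAB hC₀ hC (fun p hp => ⟨(hCAB p hp).1, (hCAB p hp).2.1⟩)
      fun p hp => hle.trans (hCAB p hp).2.2.le)
  calc (C.length : ℝ) * K ≤ (Γ / (K / 3)) ^ d * K :=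
        mul_le_mul_of_nonneg_right (lt_rpow_of_lt_mul_rpow_neg_inv ht (by positivity) hd hlt).le
          hK.le
    _ = 3 ^ d * Γ ^ d * K ^ (1 - d) := by
        rw [div_div_eq_mul_div, Real.div_rpow (by positivity) hK.le,
          Real.mul_rpow hΓ (by norm_num), Real.rpow_sub hK, Real.rpow_one]
        field_simp

lemma card_le_of_not_hasCombIn {A B : Finset V} (hAB : Disjoint A B)
    (hnbr : ∀ b ∈ B, ∃ a ∈ A, G.Adj a b) {Γ d : ℝ} (hΓ : 0 ≤ Γ) (hd : 0 < d) (hd1 : d < 1)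
    (hno : ¬ HasCombIn G A B fun t => Γ * (t : ℝ) ^ (-(1 / d))) (n : ℕ) {K : ℝ} (hK : 0 < K)
    (hKn : K < (3 / 2) ^ n) {F : Finset V} (hFB : F ⊆ B)
    (hdeg : ∀ a ∈ A, (#(F.filter (G.Adj a)) : ℝ) ≤ K) :
    (#F : ℝ) ≤ combBoundConst d * Γ ^ d * K ^ (1 - d) := by
  induction n generalizing K F with
  | zero =>
    have hF : F = ∅ := by
      refine eq_empty_of_forall_notMem fun b hb => ?_
      obtain ⟨a, ha, hab⟩ := hnbr b (hFB hb)
      have : (1 : ℝ) ≤ #(F.filter (G.Adj a)) := by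
        exact_mod_cast card_pos.mpr ⟨b, mem_filter.mpr ⟨hb, hab⟩⟩
      linarith [hdeg a ha, pow_zero (3 / 2 : ℝ)]
    have := combBoundConst_pos hd1
    subst hF
    simp only [card_empty, Nat.cast_zero]
    positivity
  | succ n ih =>
    obtain ⟨C, F', hC, hCF, hF', hcard, hdeg'⟩ :=
      exists_compatible_teeth_of_degree_le G A hK F hdeg
    have hF'bound := ih (by positivity : 0 < 2 * K / 3) (by rw [pow_succ] at hKn; linarith)
      (hF'.trans hFB) hdeg'
    have hCbound := length_mul_le_of_not_hasCombIn G hAB hΓ hd hK hno hC fun p hp =>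
      ⟨(hCF p hp).1, (hCF p hp).2.1.trans (filter_subset_filter _ hFB), (hCF p hp).2.2⟩
    have hscale : (2 * K / 3) ^ (1 - d) = (2 / 3 : ℝ) ^ (1 - d) * K ^ (1 - d) := by
      rw [mul_div_right_comm, Real.mul_rpow (by norm_num) hK.le]
    calc (#F : ℝ) ≤ #F' + 2 * C.length * K := hcard
      _ ≤ combBoundConst d * Γ ^ d * (2 * K / 3) ^ (1 - d) + 2 * (3 ^ d * Γ ^ d * K ^ (1 - d)) := by
        linarith
      _ = (combBoundConst d * (2 / 3) ^ (1 - d) + 2 * 3 ^ d) * Γ ^ d * K ^ (1 - d) := by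
        rw [hscale]; ring
      _ = combBoundConst d * Γ ^ d * K ^ (1 - d) := by rw [combBoundConst_mul_add hd1]

end Combs

theorem stmt_6_general {V : Type*} (G : SimpleGraph V)
    [DecidableRel G.Adj] (A B : Finset V)
    (hdisj : Disjoint A B)
    (hnbr : ∀ b ∈ B, ∃ a ∈ A, G.Adj a b)
    (Γ Δ d : ℝ) (hΓ : 0 < Γ) (hΔ : 0 < Δ) (hd : 0 < d) (hd1 : d < 1)
    (hdeg : ∀ a ∈ A, ((B.filter (G.Adj a)).card : ℝ) ≤ Δ) :
    (∃ t : ℕ, 1 ≤ t ∧ ∃ a : Fin t → V, ∃ Bs : Fin t → Finset V,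
        IsComb G (Γ * (t : ℝ) ^ (-(1 / d))) a Bs ∧
        (∀ i, a i ∈ A) ∧ (∀ i, Bs i ⊆ B)) ∨
    (B.card : ℝ) ≤ 3 ^ (d + 1) / (3 / 2 - (3 / 2 : ℝ) ^ d) * Γ ^ d * Δ ^ (1 - d) := by
  by_cases hcomb : HasCombIn G A B fun t => Γ * (t : ℝ) ^ (-(1 / d))
  · exact Or.inl hcomb
  obtain ⟨n, hn⟩ := pow_unbounded_of_one_lt Δ (by norm_num : (1 : ℝ) < 3 / 2)
  exact Or.inr (card_le_of_not_hasCombIn G hdisj hnbr hΓ.le hd hd1 hcomb n hΔ hn subset_rfl hdeg)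

/-- The bipartite lemma: if `(A, B)` is a bipartition of `G`, every vertex of `B` has a
neighbour in `A`, and every vertex of `A` has at most `Δ` neighbours in `B`, then either
there is a `(t, Γ t^{-1/d})`-comb in `(A, B)` for some `t ≥ 1`, or
`|B| ≤ (3^{d+1}/(3/2 - (3/2)^d)) Γ^d Δ^{1-d}`. -/
theorem stmt_6 {V : Type*} [Fintype V] [DecidableEq V] (G : SimpleGraph V)
    [DecidableRel G.Adj] (A B : Finset V)
    (hcover : ∀ v : V, v ∈ A ∨ v ∈ B) (hdisj : Disjoint A B)
    (hbip : ∀ u v : V, G.Adj u v → (u ∈ A ∧ v ∈ B) ∨ (u ∈ B ∧ v ∈ A))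
    (hnbr : ∀ b ∈ B, ∃ a ∈ A, G.Adj a b)
    (Γ Δ d : ℝ) (hΓ : 0 < Γ) (hΔ : 0 < Δ) (hd : 0 < d) (hd1 : d < 1)
    (hdeg : ∀ a ∈ A, ((B.filter (G.Adj a)).card : ℝ) ≤ Δ) :
    (∃ t : ℕ, 1 ≤ t ∧ ∃ a : Fin t → V, ∃ Bs : Fin t → Finset V,
        IsComb G (Γ * (t : ℝ) ^ (-(1 / d))) a Bs ∧
        (∀ i, a i ∈ A) ∧ (∀ i, Bs i ⊆ B)) ∨
    (B.card : ℝ) ≤ 3 ^ (d + 1) / (3 / 2 - (3 / 2 : ℝ) ^ d) * Γ ^ d * Δ ^ (1 - d) :=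
  stmt_6_general G A B hdisj hnbr Γ Δ d hΓ hΔ hd hd1 hdeg
end

section
/- Let 𝓑 = (B_1, …, B_t) be a pure blockade in a graph G whose pattern is a cograph. Then κ(G[B_1 ∪ ⋯ ∪ B_t]) ≥ Σ_{i=1}^{t} κ(G[B_i]). -/
open SimpleGraph

/-- `A` is complete to `B`: every vertex of `A` is adjacent to every vertex of `B`. -/
def CompleteTo {V : Type*} (G : SimpleGraph V) (A B : Finset V) : Prop :=
  ∀ a ∈ A, ∀ b ∈ B, G.Adj a b

/-- `A` is anticomplete to `B`: no vertex of `A` is adjacent to a vertex of `B`. -/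
def AnticompleteTo {V : Type*} (G : SimpleGraph V) (A B : Finset V) : Prop :=
  ∀ a ∈ A, ∀ b ∈ B, ¬ G.Adj a b

/-- The pattern of a pure blockade `(B 1, …, B t)`: the graph on `Fin t` in which `i, j`
are adjacent iff `i ≠ j` and `B i` is complete to `B j`. -/
def blockadePattern {V : Type*} (G : SimpleGraph V) {t : ℕ} (B : Fin t → Finset V) :
    SimpleGraph (Fin t) where
  Adj i j := i ≠ j ∧ CompleteTo G (B i) (B j)
  symm := by
    constructor
    rintro i j ⟨hij, h⟩
    exact ⟨hij.symm, fun a ha b hb => (h b hb a ha).symm⟩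
  loopless := ⟨fun i h => h.1 rfl⟩

/-!
By Seinsche's theorem a cograph on at least two vertices is disconnected or has disconnected
complement, so the blocks split into two sub-blockades that are complete or anticomplete to each
other, and one inducts on the number of blocks. If `X` is complete to `Y`, then
`ω(G[X ∪ Y]) ≥ ω(G[X]) + ω(G[Y])` while `α(G[X ∪ Y])` bounds both `α(G[X])` and `α(G[Y])`,
so `κ` is superadditive; the anticomplete case follows by complementation, since `κ(Gᶜ) = κ(G)`.
-/

open Finset

section CliqueNumber

variable {V : Type*} (G : SimpleGraph V)

lemma SimpleGraph.induce_compl (s : Set V) : (G.induce s)ᶜ = Gᶜ.induce s := by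
  ext a b
  simp [Subtype.ext_iff]

lemma SimpleGraph.exists_isNClique_cliqueNum_induce (X : Finset V) :
    ∃ s ⊆ X, G.IsNClique (G.induce (X : Set V)).cliqueNum s := by
  obtain ⟨t, ht⟩ := (G.induce (X : Set V)).exists_isNClique_cliqueNum
  refine ⟨t.map (.subtype _), fun x hx => ?_, (isNClique_induce_iff _ _ _).1 ht⟩
  obtain ⟨y, -, rfl⟩ := mem_map.1 hx
  exact y.2

lemma kappaNum_compl : kappaNum Gᶜ = kappaNum G := by
  rw [kappaNum, kappaNum, alphaNum, alphaNum, omegaNum, omegaNum, compl_compl, mul_comm]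

lemma kappaNum_induce_compl (X : Set V) : kappaNum (Gᶜ.induce X) = kappaNum (G.induce X) := by
  rw [← induce_compl, kappaNum_compl]

variable {G}

lemma SimpleGraph.IsClique.card_le_cliqueNum_induce {X s : Finset V} (hsX : s ⊆ X)
    (hs : G.IsClique (s : Set V)) : #s ≤ (G.induce (X : Set V)).cliqueNum := by
  classical
  have hc : (G.induce (X : Set V)).IsNClique #s (s.subtype (· ∈ (X : Set V))) := by
    rw [isNClique_induce_iff, subtype_map_of_mem (p := (· ∈ (X : Set V))) fun x hx => hsX hx]
    exact ⟨hs, rfl⟩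
  exact hc.card_eq ▸ hc.isClique.card_le_cliqueNum

lemma SimpleGraph.cliqueNum_induce_mono {X Y : Finset V} (h : X ⊆ Y) :
    (G.induce (X : Set V)).cliqueNum ≤ (G.induce (Y : Set V)).cliqueNum := by
  obtain ⟨s, hsX, hs⟩ := G.exists_isNClique_cliqueNum_induce X
  exact hs.card_eq ▸ hs.isClique.card_le_cliqueNum_induce (hsX.trans h)

variable [DecidableEq V] {X Y : Finset V}

lemma SimpleGraph.cliqueNum_induce_add_le_of_completeTo (hd : Disjoint X Y)
    (h : CompleteTo G X Y) :
    (G.induce (X : Set V)).cliqueNum + (G.induce (Y : Set V)).cliqueNum ≤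
      (G.induce ((X ∪ Y : Finset V) : Set V)).cliqueNum := by
  obtain ⟨s, hsX, hs⟩ := G.exists_isNClique_cliqueNum_induce X
  obtain ⟨r, hrY, hr⟩ := G.exists_isNClique_cliqueNum_induce Y
  have hsr : G.IsClique ((s ∪ r : Finset V) : Set V) := by
    rw [coe_union]
    rintro a (ha | ha) b (hb | hb) hab
    · exact hs.isClique ha hb hab
    · exact h a (hsX ha) b (hrY hb)
    · exact (h b (hsX hb) a (hrY ha)).symm
    · exact hr.isClique ha hb hab
  calc _ = #(s ∪ r) := by rw [card_union_of_disjoint (hd.mono hsX hrY), hs.card_eq, hr.card_eq]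
    _ ≤ _ := hsr.card_le_cliqueNum_induce (union_subset_union hsX hrY)

lemma kappaNum_induce_add_le_of_completeTo (hd : Disjoint X Y) (h : CompleteTo G X Y) :
    kappaNum (G.induce (X : Set V)) + kappaNum (G.induce (Y : Set V)) ≤
      kappaNum (G.induce ((X ∪ Y : Finset V) : Set V)) := by
  have hα {Z : Finset V} (hZ : Z ⊆ X ∪ Y) :
      alphaNum (G.induce (Z : Set V)) ≤ alphaNum (G.induce ((X ∪ Y : Finset V) : Set V)) := by
    simp only [alphaNum, induce_compl]
    exact cliqueNum_induce_mono hZ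
  have hω := cliqueNum_induce_add_le_of_completeTo hd h
  simp only [kappaNum, omegaNum] at hω ⊢
  calc _ ≤ alphaNum (G.induce ((X ∪ Y : Finset V) : Set V)) *
        ((G.induce (X : Set V)).cliqueNum + (G.induce (Y : Set V)).cliqueNum) := by
        rw [mul_add]
        gcongr
        exacts [hα subset_union_left, hα subset_union_right]
    _ ≤ _ := Nat.mul_le_mul_left _ hω

lemma kappaNum_induce_add_le_of_anticompleteTo (hd : Disjoint X Y) (h : AnticompleteTo G X Y) :
    kappaNum (G.induce (X : Set V)) + kappaNum (G.induce (Y : Set V)) ≤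
      kappaNum (G.induce ((X ∪ Y : Finset V) : Set V)) := by
  have hc : CompleteTo Gᶜ X Y := fun a ha b hb =>
    ⟨fun hab => disjoint_left.1 hd ha (hab ▸ hb), h a ha b hb⟩
  simpa only [kappaNum_induce_compl] using kappaNum_induce_add_le_of_completeTo hd hc

end CliqueNumber

section Cograph

variable {W : Type*} {H : SimpleGraph W}

lemma SimpleGraph.pathGraph_four_isIndContained_compl : pathGraph 4 ⊴ (pathGraph 4)ᶜ :=
  ⟨⟨⟨![1, 3, 0, 2], by decide⟩, by
    intro a b
    fin_cases a <;> fin_cases b <;> simp [pathGraph_adj]⟩⟩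

lemma SimpleGraph.not_pathGraph_four_isIndContained_compl (hH : ¬ pathGraph 4 ⊴ H) :
    ¬ pathGraph 4 ⊴ Hᶜ := fun h =>
  hH (pathGraph_four_isIndContained_compl.trans (compl_compl H ▸ h.compl))

lemma SimpleGraph.pathGraph_four_isIndContained_of_adj {a b c d : W} (hab : H.Adj a b)
    (hbc : H.Adj b c) (hcd : H.Adj c d) (hac : ¬ H.Adj a c) (had : ¬ H.Adj a d)
    (hbd : ¬ H.Adj b d) : pathGraph 4 ⊴ H := by
  have hac' : a ≠ c := by rintro rfl; exact had hcd
  have had' : a ≠ d := by rintro rfl; exact hac hcd.symm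
  have hbd' : b ≠ d := by rintro rfl; exact had hab
  refine ⟨⟨⟨![a, b, c, d], fun i j hij => ?_⟩, fun {i j} => ?_⟩⟩
  · fin_cases i <;> fin_cases j <;> simp_all [hab.ne, hbc.ne, hcd.ne, hab.ne.symm, hbc.ne.symm,
      hcd.ne.symm, hac'.symm, had'.symm, hbd'.symm]
  · change H.Adj (![a, b, c, d] i) (![a, b, c, d] j) ↔ _
    fin_cases i <;> fin_cases j <;>
      simp [pathGraph_adj, hab, hbc, hcd, hac, had, hbd, hab.symm, hbc.symm, hcd.symm,
        mt H.adj_symm hac, mt H.adj_symm had, mt H.adj_symm hbd]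

lemma anticompleteTo_comm {X Y : Finset W} : AnticompleteTo H X Y ↔ AnticompleteTo H Y X :=
  ⟨fun h a ha b hb hab => h b hb a ha hab.symm, fun h a ha b hb hab => h b hb a ha hab.symm⟩

variable [DecidableEq W]

/-- Equivalently, `H[S]` is disconnected. -/
def SimpleGraph.HasAnticompleteSplit (H : SimpleGraph W) (S : Finset W) : Prop :=
  ∃ S₁ S₂ : Finset W, Disjoint S₁ S₂ ∧ S₁ ∪ S₂ = S ∧ S₁.Nonempty ∧ S₂.Nonempty ∧
    AnticompleteTo H S₁ S₂

lemma SimpleGraph.hasAnticompleteSplit_pair {v w : W} (hvw : v ≠ w) :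
    H.HasAnticompleteSplit {v, w} ∨ Hᶜ.HasAnticompleteSplit {v, w} := by
  have hsplit : Disjoint {v} {w} ∧ {v} ∪ {w} = ({v, w} : Finset W) :=
    ⟨disjoint_singleton.2 hvw, rfl⟩
  by_cases h : H.Adj v w
  · refine .inr ⟨{v}, {w}, hsplit.1, hsplit.2, singleton_nonempty v, singleton_nonempty w, ?_⟩
    simpa [AnticompleteTo, hvw] using h
  · refine .inl ⟨{v}, {w}, hsplit.1, hsplit.2, singleton_nonempty v, singleton_nonempty w, ?_⟩
    simpa [AnticompleteTo] using h

/-- `v` has no neighbour `y ∈ Y`, as `a b v y` would be an induced `P₄`. -/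
lemma SimpleGraph.hasAnticompleteSplit_insert_of_adj (hH : ¬ pathGraph 4 ⊴ H)
    {X Y : Finset W} {v a b : W} (hd : Disjoint X Y) (hXY : AnticompleteTo H X Y)
    (hY : Y.Nonempty) (hvY : v ∉ Y) (ha : a ∈ X) (hb : b ∈ X) (hab : H.Adj a b)
    (hva : ¬ H.Adj v a) (hvb : H.Adj v b) : H.HasAnticompleteSplit (insert v (X ∪ Y)) := by
  have hnY : ∀ y ∈ Y, ¬ H.Adj v y := fun y hy hvy =>
    hH (pathGraph_four_isIndContained_of_adj hab hvb.symm hvy (mt H.adj_symm hva)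
      (hXY a ha y hy) (hXY b hb y hy))
  refine ⟨insert v X, Y, disjoint_insert_left.2 ⟨hvY, hd⟩, insert_union v X Y, insert_nonempty v X,
    hY, ?_⟩
  intro x hx y hy
  rcases mem_insert.1 hx with rfl | hx
  exacts [hnY y hy, hXY x hx y hy]

lemma SimpleGraph.hasAnticompleteSplit_insert (hH : ¬ pathGraph 4 ⊴ H) {T : Finset W} {v : W}
    (hv : v ∉ T) (hT : H.HasAnticompleteSplit T) :
    H.HasAnticompleteSplit (insert v T) ∨ Hᶜ.HasAnticompleteSplit (insert v T) := by
  classical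
  obtain ⟨X, Y, hd, rfl, hX, hY, hXY⟩ := hT
  -- Either `v` is complete to `X ∪ Y`, or its non-neighbours `N` split off, or some edge
  -- joins `N` to a neighbour of `v`, and then `v` has no neighbour on the other side.
  set N := (X ∪ Y).filter (¬ H.Adj v ·)
  have hN : N ⊆ insert v (X ∪ Y) := (filter_subset _ _).trans (subset_insert v _)
  rcases N.eq_empty_or_nonempty with hN₀ | hN₀
  · refine .inr ⟨{v}, X ∪ Y, disjoint_singleton_left.2 hv, (insert_eq v _).symm,
      singleton_nonempty v, hX.mono subset_union_left, ?_⟩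
    rintro _ hx y hy ⟨-, hvy⟩
    rw [mem_singleton.1 hx] at hvy
    exact filter_eq_empty_iff.1 hN₀ hy hvy
  by_cases hNc : AnticompleteTo H N (insert v (X ∪ Y) \ N)
  · exact .inl ⟨N, _, disjoint_sdiff, union_sdiff_of_subset hN, hN₀,
      ⟨v, mem_sdiff.2 ⟨mem_insert_self v _, fun h => hv (mem_filter.1 h).1⟩⟩, hNc⟩
  simp only [AnticompleteTo, not_forall, not_not] at hNc
  obtain ⟨a, haN, b, hb, hab⟩ := hNc
  obtain ⟨haT, hva⟩ := mem_filter.1 haN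
  obtain ⟨hbT, hvb⟩ : b ∈ X ∪ Y ∧ H.Adj v b := by
    obtain ⟨hb, hbN⟩ := mem_sdiff.1 hb
    rcases mem_insert.1 hb with rfl | hb
    · exact absurd hab.symm hva
    · exact ⟨hb, by simpa [N, hb] using hbN⟩
  left
  rcases mem_union.1 haT, mem_union.1 hbT with ⟨ha | ha, hb | hb⟩
  · exact hasAnticompleteSplit_insert_of_adj hH hd hXY hY (fun h => hv (mem_union_right X h))
      ha hb hab hva hvb
  · exact absurd hab (hXY a ha b hb)
  · exact absurd hab.symm (hXY b hb a ha)
  · rw [union_comm]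
    exact hasAnticompleteSplit_insert_of_adj hH hd.symm (anticompleteTo_comm.1 hXY) hX
      (fun h => hv (mem_union_left Y h)) ha hb hab hva hvb

/-- Seinsche's theorem. -/
lemma SimpleGraph.hasAnticompleteSplit_or_compl (hH : ¬ pathGraph 4 ⊴ H) {S : Finset W}
    (hS : 2 ≤ #S) : H.HasAnticompleteSplit S ∨ Hᶜ.HasAnticompleteSplit S := by
  induction S using Finset.induction_on with
  | empty => simp at hS
  | insert v T hv ih =>
    rw [card_insert_of_notMem hv] at hS
    by_cases hT : 2 ≤ #T
    · rcases ih hT with hT | hT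
      · exact hasAnticompleteSplit_insert hH hv hT
      · simpa only [compl_compl, or_comm] using
          hasAnticompleteSplit_insert (not_pathGraph_four_isIndContained_compl hH) hv hT
    · obtain ⟨w, rfl⟩ := card_eq_one.1 (show #T = 1 by omega)
      exact hasAnticompleteSplit_pair (fun h => hv (mem_singleton.2 h))

end Cograph

section Blockade

variable {V : Type*} [DecidableEq V] {G : SimpleGraph V} {t : ℕ} {B : Fin t → Finset V}

lemma completeTo_biUnion {S₁ S₂ : Finset (Fin t)}
    (h : ∀ i ∈ S₁, ∀ j ∈ S₂, CompleteTo G (B i) (B j)) :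
    CompleteTo G (S₁.biUnion B) (S₂.biUnion B) := by
  simp only [CompleteTo, mem_biUnion]
  rintro a ⟨i, hi, ha⟩ b ⟨j, hj, hb⟩
  exact h i hi j hj a ha b hb

lemma anticompleteTo_biUnion {S₁ S₂ : Finset (Fin t)}
    (h : ∀ i ∈ S₁, ∀ j ∈ S₂, AnticompleteTo G (B i) (B j)) :
    AnticompleteTo G (S₁.biUnion B) (S₂.biUnion B) := by
  simp only [AnticompleteTo, mem_biUnion]
  rintro a ⟨i, hi, ha⟩ b ⟨j, hj, hb⟩
  exact h i hi j hj a ha b hb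

lemma exists_pure_split_of_pattern (hpure : ∀ i j, i ≠ j →
      CompleteTo G (B i) (B j) ∨ AnticompleteTo G (B i) (B j))
    (hcograph : ¬ pathGraph 4 ⊴ blockadePattern G B) {S : Finset (Fin t)} (hS : 2 ≤ #S) :
    ∃ S₁ S₂ : Finset (Fin t), Disjoint S₁ S₂ ∧ S₁ ∪ S₂ = S ∧ S₁.Nonempty ∧ S₂.Nonempty ∧
      (CompleteTo G (S₁.biUnion B) (S₂.biUnion B) ∨
        AnticompleteTo G (S₁.biUnion B) (S₂.biUnion B)) := by
  rcases hasAnticompleteSplit_or_compl hcograph hS with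
    ⟨S₁, S₂, hd, hU, h₁, h₂, hanti⟩ | ⟨S₁, S₂, hd, hU, h₁, h₂, hanti⟩
  · refine ⟨S₁, S₂, hd, hU, h₁, h₂, .inr (anticompleteTo_biUnion fun i hi j hj => ?_)⟩
    have hij : i ≠ j := disjoint_iff_ne.1 hd i hi j hj
    exact (hpure i j hij).resolve_left fun hc => hanti i hi j hj ⟨hij, hc⟩
  · refine ⟨S₁, S₂, hd, hU, h₁, h₂, .inl (completeTo_biUnion fun i hi j hj => ?_)⟩
    have hij : i ≠ j := disjoint_iff_ne.1 hd i hi j hj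
    by_contra hc
    exact hanti i hi j hj ⟨hij, fun h => hc h.2⟩

lemma sum_kappaNum_le_kappaNum_biUnion (hdisj : Pairwise (Function.onFun Disjoint B))
    (hpure : ∀ i j, i ≠ j → CompleteTo G (B i) (B j) ∨ AnticompleteTo G (B i) (B j))
    (hcograph : ¬ pathGraph 4 ⊴ blockadePattern G B) (S : Finset (Fin t)) :
    ∑ i ∈ S, kappaNum (G.induce (B i : Set V)) ≤
      kappaNum (G.induce ((S.biUnion B : Finset V) : Set V)) := by
  induction S using Finset.strongInduction with
  | H S ih =>
  rcases lt_or_ge #S 2 with hS | hS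
  · obtain h | h : #S = 0 ∨ #S = 1 := by omega
    · simp [card_eq_zero.1 h]
    · obtain ⟨i, rfl⟩ := card_eq_one.1 h
      rw [sum_singleton, singleton_biUnion]
  obtain ⟨S₁, S₂, hd, rfl, h₁, h₂, hS₁₂⟩ := exists_pure_split_of_pattern hpure hcograph hS
  have hdB : Disjoint (S₁.biUnion B) (S₂.biUnion B) := by
    simp only [disjoint_biUnion_left, disjoint_biUnion_right]
    exact fun j hj i hi => hdisj (disjoint_iff_ne.1 hd i hi j hj)
  rw [sum_union hd, union_biUnion]
  calc _ ≤ kappaNum (G.induce ((S₁.biUnion B : Finset V) : Set V)) +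
        kappaNum (G.induce ((S₂.biUnion B : Finset V) : Set V)) :=
        add_le_add (ih S₁ (left_lt_sup.2 fun h => h₂.ne_empty (hd.symm.eq_bot_of_le h)))
          (ih S₂ (right_lt_sup.2 fun h => h₁.ne_empty (hd.eq_bot_of_le h)))
    _ ≤ _ := hS₁₂.elim (kappaNum_induce_add_le_of_completeTo hdB)
        (kappaNum_induce_add_le_of_anticompleteTo hdB)

end Blockade

theorem stmt_10_general {V : Type*} [DecidableEq V] (G : SimpleGraph V)
    (t : ℕ) (B : Fin t → Finset V)
    (hdisj : Pairwise (Function.onFun Disjoint B))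
    (hpure : ∀ i j, i ≠ j → CompleteTo G (B i) (B j) ∨ AnticompleteTo G (B i) (B j))
    (hcograph : ¬ Nonempty (pathGraph 4 ↪g blockadePattern G B)) :
    ∑ i, kappaNum (G.induce (B i : Set V)) ≤
      kappaNum (G.induce ((Finset.univ.biUnion B : Finset V) : Set V)) :=
  sum_kappaNum_le_kappaNum_biUnion hdisj hpure hcograph univ

/-- If `(B 1, …, B t)` is a pure blockade with a cograph pattern then
`κ(G[B 1 ∪ ⋯ ∪ B t]) ≥ Σ_i κ(G[B i])`. -/
theorem stmt_10 {V : Type*} [Fintype V] [DecidableEq V] (G : SimpleGraph V)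
    (t : ℕ) (B : Fin t → Finset V)
    (hdisj : Pairwise (Function.onFun Disjoint B))
    (hpure : ∀ i j, i ≠ j → CompleteTo G (B i) (B j) ∨ AnticompleteTo G (B i) (B j))
    (hcograph : ¬ Nonempty (pathGraph 4 ↪g blockadePattern G B)) :
    ∑ i, kappaNum (G.induce (B i : Set V)) ≤
      kappaNum (G.induce ((Finset.univ.biUnion B : Finset V) : Set V)) :=
  stmt_10_general G t B hdisj hpure hcograph
end
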